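/- arXiv:1608.07693 — 2 statements merged into one kernel-verified Lean document; each statement's English description precedes it below -/
import Mathlib

section
/- Let A be a symmetric positive-definite n×n matrix, F_k : ℝ → ℝ continuous with F_k(0)=0, h_k Lipschitz with constants L_k ≤ L, h_k(0)=0, and λ > 0. Define J_λ(u) = (uᵀAu)/2 − Σₖ H_k(u_k) − λ Σₖ F_k(u_k). If limsup_{t→+∞} (Σₖ F_k(t))/t² > (trace(A) + 2Σ_{i<j} a_{ij} + nL)/(2λ), then J_λ is unbounded from below on ℝⁿ. -/
/-!
On the diagonal `u = (t, …, t)` the quadratic part of `J_λ` is `t² (tr A + 2 ∑_{i<j} a_{ij}) / 2`,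
and the Lipschitz bound `h_k(ξ) ≥ -L ξ` gives `-∑ₖ H_k(t) ≤ n L t² / 2`. Writing `S` for
`tr A + 2 ∑_{i<j} a_{ij} + n L`, the `limsup` hypothesis yields `c > S / (2λ)` and arbitrarily
large `t` with `∑ₖ F_k(t) ≥ c t²`, so `J_λ(t, …, t) ≤ t² (S / 2 - λ c) → -∞` along those `t`.
-/

open Matrix Finset Filter

theorem Matrix.IsSymm.sum_sum_eq_trace_add_two_mul {ι R : Type*} [Fintype ι] [LinearOrder ι]
    [Semiring R] {A : Matrix ι ι R} (hA : A.IsSymm) :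
    ∑ i, ∑ j, A i j = A.trace + 2 * ∑ i, ∑ j, (if i < j then A i j else 0) := by
  have hsplit : ∀ i j, A i j =
      (if i = j then A i j else 0) + (if i < j then A i j else 0) + (if j < i then A j i else 0) := by
    intro i j
    rcases lt_trichotomy i j with hij | rfl | hij
    · simp [hij, hij.ne, hij.not_gt]
    · simp
    · simp [hij, hij.ne', hij.not_gt, hA.apply]
  have hlower : ∑ i, ∑ j, (if j < i then A j i else 0) = ∑ i, ∑ j, (if i < j then A i j else 0) :=
    Finset.sum_comm
  calc ∑ i, ∑ j, A i j
      = ∑ i, ∑ j, ((if i = j then A i j else 0) + (if i < j then A i j else 0)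
          + (if j < i then A j i else 0)) :=
        Finset.sum_congr rfl fun i _ => Finset.sum_congr rfl fun j _ => hsplit i j
    _ = A.trace + 2 * ∑ i, ∑ j, (if i < j then A i j else 0) := by
      simp only [Finset.sum_add_distrib, hlower, Finset.sum_ite_eq, mem_univ, if_true, two_mul,
        add_assoc, trace, diag]

theorem Matrix.const_dotProduct_mulVec_const {ι R : Type*} [Fintype ι] [CommSemiring R]
    (A : Matrix ι ι R) (t : R) :
    (fun _ => t) ⬝ᵥ A *ᵥ (fun _ => t) = t ^ 2 * ∑ i, ∑ j, A i j := by
  simp only [dotProduct, mulVec, Finset.mul_sum]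
  exact Finset.sum_congr rfl fun i _ => Finset.sum_congr rfl fun j _ => by ring

theorem continuous_of_abs_sub_le_mul {f : ℝ → ℝ} {L : ℝ}
    (hf : ∀ x y, |f x - f y| ≤ L * |x - y|) : Continuous f := by
  have hL : 0 ≤ L := by simpa using (abs_nonneg _).trans (hf 1 0)
  refine (LipschitzWith.of_dist_le_mul (K := ⟨L, hL⟩) fun x y => ?_).continuous
  rw [Real.dist_eq, Real.dist_eq]
  exact hf x y

theorem neg_mul_sq_div_two_le_integral {f : ℝ → ℝ} {L t : ℝ}
    (hf : ∀ x y, |f x - f y| ≤ L * |x - y|) (hf0 : f 0 = 0) (ht : 0 ≤ t) :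
    -(L * t ^ 2 / 2) ≤ ∫ ξ in (0 : ℝ)..t, f ξ := by
  have hlower : ∀ ξ ∈ Set.Icc 0 t, -(L * ξ) ≤ f ξ := fun ξ hξ => by
    have := hf ξ 0
    rw [hf0, sub_zero, sub_zero, abs_of_nonneg hξ.1] at this
    linarith [neg_abs_le (f ξ)]
  calc -(L * t ^ 2 / 2) = ∫ ξ in (0 : ℝ)..t, -(L * ξ) := by
        rw [intervalIntegral.integral_neg, intervalIntegral.integral_const_mul, integral_id]
        ring
    _ ≤ ∫ ξ in (0 : ℝ)..t, f ξ :=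
        intervalIntegral.integral_mono_on ht
          ((continuous_const.mul continuous_id).neg.intervalIntegrable 0 t)
          ((continuous_of_abs_sub_le_mul hf).intervalIntegrable 0 t) hlower

theorem energy_const_le {n : ℕ} {A : Matrix (Fin n) (Fin n) ℝ} (hA : A.IsSymm)
    {F h : Fin n → ℝ → ℝ} {L lam c t : ℝ}
    (hLip : ∀ k t1 t2, |h k t1 - h k t2| ≤ L * |t1 - t2|) (h0 : ∀ k, h k 0 = 0)
    (hlam : 0 ≤ lam) (ht : 0 ≤ t) (hF : c * t ^ 2 ≤ ∑ k, F k t) :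
    (fun _ => t) ⬝ᵥ A.mulVec (fun _ => t) / 2 - ∑ k, (∫ ξ in (0:ℝ)..t, h k ξ)
        - lam * ∑ k, F k t
      ≤ t ^ 2 * ((A.trace + 2 * ∑ i, ∑ j, (if i < j then A i j else 0) + n * L) / 2
        - lam * c) := by
  have hH : -(n * (L * t ^ 2 / 2)) ≤ ∑ k, ∫ ξ in (0:ℝ)..t, h k ξ := by
    simpa using Finset.sum_le_sum fun k (_ : k ∈ univ) =>
      neg_mul_sq_div_two_le_integral (hLip k) (h0 k) ht
  have hFlam := mul_le_mul_of_nonneg_left hF hlam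
  rw [const_dotProduct_mulVec_const, hA.sum_sum_eq_trace_add_two_mul]
  linarith

theorem stmt8_general (n : ℕ) (A : Matrix (Fin n) (Fin n) ℝ)
    (hA : A.IsHermitian)
    (F : Fin n → ℝ → ℝ)
    (h : Fin n → ℝ → ℝ) (L : ℝ)
    (hLip : ∀ k t1 t2, |h k t1 - h k t2| ≤ L * |t1 - t2|)
    (h0 : ∀ k, h k 0 = 0)
    (lam : ℝ) (hlam : 0 < lam)
    (hB : ∃ c : ℝ,
      (A.trace + 2 * ∑ i, ∑ j, (if i < j then A i j else 0) + n * L) / (2 * lam) < c ∧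
      ∃ᶠ t in atTop, c ≤ (∑ k, F k t) / t ^ 2) :
    ∀ M : ℝ, ∃ u : Fin n → ℝ,
      u ⬝ᵥ A.mulVec u / 2 - ∑ k, (∫ ξ in (0:ℝ)..(u k), h k ξ)
        - lam * ∑ k, F k (u k) < M := by
  obtain ⟨c, hc, hfreq⟩ := hB
  intro M
  set S := A.trace + 2 * ∑ i, ∑ j, (if i < j then A i j else 0) + n * L
  have hK : S / 2 - lam * c < 0 := by
    rw [div_lt_iff₀ (by positivity)] at hc
    linarith
  have hbot : Tendsto (fun t : ℝ => t ^ 2 * (S / 2 - lam * c)) atTop atBot :=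
    (tendsto_pow_atTop two_ne_zero).atTop_mul_const_of_neg hK
  obtain ⟨t, hct, htM, ht⟩ :=
    (hfreq.and_eventually ((hbot.eventually_lt_atBot M).and (eventually_gt_atTop 0))).exists
  exact ⟨fun _ => t, (energy_const_le (isHermitian_iff_isSymm.mp hA) hLip h0 hlam.le ht.le
    ((le_div_iff₀ (by positivity)).mp hct)).trans_lt htM⟩

theorem stmt8 (n : ℕ) (A : Matrix (Fin n) (Fin n) ℝ)
    (hA : A.IsHermitian) (hPD : A.PosDef)
    (F : Fin n → ℝ → ℝ) (hF : ∀ k, Continuous (F k)) (hF0 : ∀ k, F k 0 = 0)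
    (h : Fin n → ℝ → ℝ) (L : ℝ) (hL0 : 0 ≤ L)
    (hLip : ∀ k t1 t2, |h k t1 - h k t2| ≤ L * |t1 - t2|)
    (h0 : ∀ k, h k 0 = 0)
    (lam : ℝ) (hlam : 0 < lam)
    (hB : ∃ c : ℝ,
      (A.trace + 2 * ∑ i, ∑ j, (if i < j then A i j else 0) + n * L) / (2 * lam) < c ∧
      ∃ᶠ t in atTop, c ≤ (∑ k, F k t) / t ^ 2) :
    ∀ M : ℝ, ∃ u : Fin n → ℝ,
      u ⬝ᵥ A.mulVec u / 2 - ∑ k, (∫ ξ in (0:ℝ)..(u k), h k ξ)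
        - lam * ∑ k, F k (u k) < M :=
  stmt8_general n A hA F h L hLip h0 lam hlam hB
end

section
/- Let n = 1, A = (a) with a > 0, f : ℝ → ℝ continuous, h : ℝ → ℝ Lipschitz with constant L < a and h(0) = 0, and λ > 0. Suppose liminf_{t→+∞} (max_{|ξ|≤t} F(ξ))/t² = 0 and limsup_{t→+∞} F(t)/t² = +∞, where F(t) = ∫₀ᵗ f. Then the equation a·u = λ f(u) + h(u) admits an unbounded sequence of real solutions, i.e., for every R > 0 there exists u ∈ ℝ with |u| > R and a·u = λ f(u) + h(u). -/
/-!
Solutions are the critical points of the energy `Φ(u) = a u²/2 - λ F(u) - H(u)`, where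
`H(u) = ∫₀ᵘ h`, and the Lipschitz bound gives `|H(u)| ≤ L u²/2`. Given `R`, the limsup condition
yields `s > R` with `Φ(s)` below both `0` and `min_{[-R,R]} Φ`; the liminf condition then yields
`t > s` with `Φ(±t) ≥ (a - L) t²/4 > 0`. The minimum of `Φ` on `[-t, t]` is therefore attained in
the interior, hence at a critical point, and it lies outside `[-R, R]`.
-/

open Filter Set

theorem abs_integral_le_of_abs_le_mul_abs_of_nonneg {g : ℝ → ℝ} {L u : ℝ} (hg : Continuous g)
    (hgL : ∀ x, |g x| ≤ L * |x|) (hu : 0 ≤ u) : |∫ x in (0:ℝ)..u, g x| ≤ L * u ^ 2 / 2 :=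
  calc |∫ x in (0:ℝ)..u, g x| ≤ ∫ x in (0:ℝ)..u, |g x| :=
        intervalIntegral.abs_integral_le_integral_abs hu
    _ ≤ ∫ x in (0:ℝ)..u, L * x := by
        refine intervalIntegral.integral_mono_on hu (hg.abs.intervalIntegrable _ _)
          ((continuous_const.mul continuous_id).intervalIntegrable _ _) fun x hx => ?_
        simpa only [abs_of_nonneg hx.1] using hgL x
    _ = L * u ^ 2 / 2 := by
        rw [intervalIntegral.integral_const_mul, integral_id]
        ring

theorem abs_integral_le_of_abs_le_mul_abs {g : ℝ → ℝ} {L : ℝ} (hg : Continuous g)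
    (hgL : ∀ x, |g x| ≤ L * |x|) (u : ℝ) : |∫ x in (0:ℝ)..u, g x| ≤ L * u ^ 2 / 2 := by
  rcases le_total 0 u with hu | hu
  · exact abs_integral_le_of_abs_le_mul_abs_of_nonneg hg hgL hu
  · have hreflect : ∫ x in (0:ℝ)..-u, g (-x) = -∫ x in (0:ℝ)..u, g x := by
      rw [intervalIntegral.integral_comp_neg, neg_neg, neg_zero, intervalIntegral.integral_symm]
    have := abs_integral_le_of_abs_le_mul_abs_of_nonneg (hg.comp continuous_neg)
      (fun x => by simpa only [Function.comp, abs_neg] using hgL (-x)) (neg_nonneg.2 hu)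
    simpa only [Function.comp, hreflect, abs_neg, neg_sq] using this

theorem exists_isLocalMin_mem_Ioo_le {Φ : ℝ → ℝ} {a b s : ℝ} (hΦ : ContinuousOn Φ (Icc a b))
    (hs : s ∈ Icc a b) (hsa : Φ s < Φ a) (hsb : Φ s < Φ b) :
    ∃ u ∈ Ioo a b, IsLocalMin Φ u ∧ Φ u ≤ Φ s := by
  obtain ⟨u, hu, hmin⟩ := isCompact_Icc.exists_isMinOn ⟨s, hs⟩ hΦ
  have hus : Φ u ≤ Φ s := hmin hs
  have hua : u ≠ a := by rintro rfl; exact hus.not_gt hsa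
  have hub : u ≠ b := by rintro rfl; exact hus.not_gt hsb
  have hu' : u ∈ Ioo a b := ⟨lt_of_le_of_ne hu.1 hua.symm, lt_of_le_of_ne hu.2 hub⟩
  exact ⟨u, hu', hmin.isLocalMin (Icc_mem_nhds hu'.1 hu'.2), hus⟩

noncomputable def energy (a lam : ℝ) (f h : ℝ → ℝ) (u : ℝ) : ℝ :=
  a * u ^ 2 / 2 - lam * (∫ s in (0:ℝ)..u, f s) - ∫ s in (0:ℝ)..u, h s

section energy

variable {a lam L : ℝ} {f h : ℝ → ℝ}

theorem hasDerivAt_energy (hf : Continuous f) (hh : Continuous h) (u : ℝ) :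
    HasDerivAt (energy a lam f h) (a * u - lam * f u - h u) u := by
  have hF := hf.integral_hasStrictDerivAt 0 u |>.hasDerivAt
  have hH := hh.integral_hasStrictDerivAt 0 u |>.hasDerivAt
  have hq : HasDerivAt (fun u : ℝ => a * u ^ 2 / 2) (a * u) u :=
    (((hasDerivAt_pow 2 u).const_mul a).div_const 2).congr_deriv (by norm_num; ring)
  exact (hq.sub (hF.const_mul lam)).sub hH

theorem continuous_energy (hf : Continuous f) (hh : Continuous h) :
    Continuous (energy a lam f h) :=
  continuous_iff_continuousAt.2 fun u => (hasDerivAt_energy hf hh u).continuousAt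

theorem energy_le (hh : Continuous h) (hhL : ∀ x, |h x| ≤ L * |x|) (u : ℝ) :
    energy a lam f h u ≤ (a + L) / 2 * u ^ 2 - lam * ∫ s in (0:ℝ)..u, f s := by
  have := (abs_le.1 (abs_integral_le_of_abs_le_mul_abs hh hhL u)).1
  rw [energy]
  linarith

theorem le_energy (hh : Continuous h) (hhL : ∀ x, |h x| ≤ L * |x|) (u : ℝ) :
    (a - L) / 2 * u ^ 2 - lam * (∫ s in (0:ℝ)..u, f s) ≤ energy a lam f h u := by
  have := (abs_le.1 (abs_integral_le_of_abs_le_mul_abs hh hhL u)).2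
  rw [energy]
  linarith

theorem frequently_energy_lt (hlam : 0 < lam) (hh : Continuous h)
    (hhL : ∀ x, |h x| ≤ L * |x|)
    (hsup : ∀ M : ℝ, ∃ᶠ t in atTop, M * t ^ 2 < ∫ s in (0:ℝ)..t, f s) (C : ℝ) :
    ∃ᶠ s in atTop, energy a lam f h s < C := by
  have hsq : ∀ᶠ s : ℝ in atTop, -s ^ 2 < C :=
    (tendsto_neg_atBot_iff.2 (tendsto_pow_atTop two_ne_zero)).eventually_lt_atBot C
  refine ((hsup (((a + L) / 2 + 1) / lam)).and_eventually hsq).mono fun s ⟨hF, hs⟩ => ?_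
  have hlamF : ((a + L) / 2 + 1) * s ^ 2 < lam * ∫ x in (0:ℝ)..s, f x := by
    have := mul_lt_mul_of_pos_left hF hlam
    rwa [← mul_assoc, mul_div_cancel₀ _ hlam.ne'] at this
  linarith [energy_le (a := a) (lam := lam) (f := f) hh hhL s]

theorem frequently_energy_pos (hlam : 0 < lam) (hLa : L < a) (hf : Continuous f)
    (hh : Continuous h) (hhL : ∀ x, |h x| ≤ L * |x|)
    (hinf : ∀ ε > (0:ℝ), ∃ᶠ t in atTop,
      sSup ((fun ξ => ∫ s in (0:ℝ)..ξ, f s) '' Icc (-t) t) < ε * t ^ 2) :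
    ∃ᶠ t in atTop, 0 < energy a lam f h t ∧ 0 < energy a lam f h (-t) := by
  have hε : 0 < (a - L) / (4 * lam) := div_pos (by linarith) (by linarith)
  refine ((hinf _ hε).and_eventually (eventually_gt_atTop 0)).mono fun t ⟨hsSup, ht⟩ => ?_
  have hFc : Continuous fun ξ => ∫ s in (0:ℝ)..ξ, f s :=
    intervalIntegral.continuous_primitive (fun _ _ => hf.intervalIntegrable _ _) 0
  have hbdd := ((isCompact_Icc (a := -t) (b := t)).image hFc).bddAbove
  have hpos : ∀ v ∈ Icc (-t) t, v ^ 2 = t ^ 2 → 0 < energy a lam f h v := by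
    intro v hv hv2
    have hF := mul_lt_mul_of_pos_left ((le_csSup hbdd (mem_image_of_mem _ hv)).trans_lt hsSup)
      hlam
    rw [← mul_assoc, show lam * ((a - L) / (4 * lam)) = (a - L) / 4 by field_simp] at hF
    have := le_energy (a := a) (lam := lam) (f := f) hh hhL v
    rw [hv2] at this
    nlinarith
  exact ⟨hpos t ⟨by linarith, le_rfl⟩ rfl, hpos (-t) ⟨le_rfl, by linarith⟩ (neg_sq t)⟩

end energy

theorem stmt9_general (a : ℝ) (f : ℝ → ℝ) (hf : Continuous f)
    (h : ℝ → ℝ) (L : ℝ) (hLa : L < a)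
    (hLip : ∀ t1 t2, |h t1 - h t2| ≤ L * |t1 - t2|) (h0 : h 0 = 0)
    (lam : ℝ) (hlam : 0 < lam)
    (hinf : ∀ ε > (0:ℝ), ∃ᶠ t in atTop,
      sSup ((fun ξ => ∫ s in (0:ℝ)..ξ, f s) '' Set.Icc (-t) t) < ε * t ^ 2)
    (hsup : ∀ M : ℝ, ∃ᶠ t in atTop, M * t ^ 2 < ∫ s in (0:ℝ)..t, f s) :
    ∀ R > (0:ℝ), ∃ u : ℝ, R < |u| ∧ a * u = lam * f u + h u := by
  intro R hR
  have hh : Continuous h :=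
    (LipschitzWith.of_dist_le' fun x y => by simpa only [Real.dist_eq] using hLip x y).continuous
  have hhL : ∀ x, |h x| ≤ L * |x| := fun x => by simpa only [h0, sub_zero] using hLip x 0
  set Φ := energy a lam f h
  have hΦ : Continuous Φ := continuous_energy hf hh
  obtain ⟨x₀, -, hx₀⟩ := (isCompact_Icc (a := -R) (b := R)).exists_isMinOn
    (nonempty_Icc.2 (by linarith)) hΦ.continuousOn
  obtain ⟨s, hΦs, hRs⟩ := ((frequently_energy_lt (a := a) hlam hh hhL hsup
    (min (Φ x₀) 0)).and_eventually (eventually_gt_atTop R)).exists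
  have hΦs_neg : Φ s < 0 := hΦs.trans_le (min_le_right _ _)
  obtain ⟨t, ⟨hΦt, hΦnt⟩, hst⟩ := ((frequently_energy_pos hlam hLa hf hh hhL
    hinf).and_eventually (eventually_gt_atTop s)).exists
  obtain ⟨u, -, hu, hus⟩ := exists_isLocalMin_mem_Ioo_le (a := -t) (b := t) hΦ.continuousOn
    ⟨by linarith, hst.le⟩ (hΦs_neg.trans hΦnt) (hΦs_neg.trans hΦt)
  refine ⟨u, ?_, by linarith [hu.hasDerivAt_eq_zero (hasDerivAt_energy hf hh u)]⟩
  by_contra! huR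
  have : Φ x₀ ≤ Φ u := hx₀ (abs_le.1 huR)
  linarith [min_le_left (Φ x₀) 0]

theorem stmt9 (a : ℝ) (ha : 0 < a) (f : ℝ → ℝ) (hf : Continuous f)
    (h : ℝ → ℝ) (L : ℝ) (hL0 : 0 ≤ L) (hLa : L < a)
    (hLip : ∀ t1 t2, |h t1 - h t2| ≤ L * |t1 - t2|) (h0 : h 0 = 0)
    (lam : ℝ) (hlam : 0 < lam)
    (hinf : ∀ ε > (0:ℝ), ∃ᶠ t in atTop,
      sSup ((fun ξ => ∫ s in (0:ℝ)..ξ, f s) '' Set.Icc (-t) t) < ε * t ^ 2)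
    (hsup : ∀ M : ℝ, ∃ᶠ t in atTop, M * t ^ 2 < ∫ s in (0:ℝ)..t, f s) :
    ∀ R > (0:ℝ), ∃ u : ℝ, R < |u| ∧ a * u = lam * f u + h u :=
  stmt9_general a f hf h L hLa hLip h0 lam hlam hinf hsup
end
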